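/- Let C be a monoidal category in which every object X has a chosen dual X* with evaluation ev_X : X* ⊗ X ⟶ 𝟙 and coevaluation coev_X : 𝟙 ⟶ X ⊗ X* satisfying the snake identities. Define Q(X,Y,Z) := X ⊗ Y* ⊗ Z (functorial, using the dual f* : Y'* ⟶ Y* of a morphism f : Y ⟶ Y' in the contravariant middle variable), let φ be the isomorphism built from the associators of C, let α := (1_X ⊗ ev_Y) composed with the unitor : Q(X,Y,Y) = X ⊗ Y* ⊗ Y ⟶ X, and let β := (coev_X ⊗ 1_Y) precomposed with the inverse unitor : Y ⟶ X ⊗ X* ⊗ Y = Q(X,X,Y). Then (Q, φ, α, β) satisfies the flock axioms (F1), (F2) and (F3). -/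
import Mathlib


open CategoryTheory MonoidalCategory Category

universe v u

variable {C : Type u} [Category.{v} C] [MonoidalCategory C]

/-- `Q(X,Y,Z) := X ⊗ Y* ⊗ Z` for a choice `dual` of duals. -/
def QQ (dual : C → C) (X Y Z : C) : C := X ⊗ (dual Y ⊗ Z)

/-- The structure isomorphism `φ` built from the associators of `C`. -/
def Qphi (dual : C → C) (X Y Z W V : C) :
    QQ dual (QQ dual X Y Z) W V ≅ QQ dual X Y (QQ dual Z W V) :=
  α_ X (dual Y ⊗ Z) (dual W ⊗ V) ≪≫ whiskerLeftIso X (α_ (dual Y) Z (dual W ⊗ V))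

/-- `α := (1_X ⊗ ev_Y)` composed with the unitor. -/
def Qalpha (dual : C → C) (ev : ∀ X : C, dual X ⊗ X ⟶ 𝟙_ C) (X Y : C) :
    QQ dual X Y Y ⟶ X := (X ◁ ev Y) ≫ (ρ_ X).hom

/-- `β := (coev_X ⊗ 1_Y)` precomposed with the inverse unitor. -/
def Qbeta (dual : C → C) (coev : ∀ X : C, 𝟙_ C ⟶ X ⊗ dual X) (X Y : C) :
    Y ⟶ QQ dual X X Y := (λ_ Y).inv ≫ (coev X ▷ Y) ≫ (α_ X (dual X) Y).hom

/-- The action of `Q` on morphisms in the first variable. -/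
def Qmap₁ (dual : C → C) {X X' : C} (f : X ⟶ X') (Y Z : C) :
    QQ dual X Y Z ⟶ QQ dual X' Y Z := f ▷ (dual Y ⊗ Z)

/-- The action of `Q` on morphisms in the third variable. -/
def Qmap₃ (dual : C → C) (X Y : C) {Z Z' : C} (h : Z ⟶ Z') :
    QQ dual X Y Z ⟶ QQ dual X Y Z' := X ◁ (dual Y ◁ h)

/-- Let `C` be a monoidal category in which every object `X` has a
chosen dual `X*` with evaluation and coevaluation satisfying the snake identities.
Then `Q(X,Y,Z) := X ⊗ Y* ⊗ Z`, with `φ` built from associators, `α` from the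
evaluations and `β` from the coevaluations, satisfies the flock axioms (F1), (F2)
and (F3). -/
theorem stmt11 (dual : C → C)
    (ev : ∀ X : C, dual X ⊗ X ⟶ 𝟙_ C) (coev : ∀ X : C, 𝟙_ C ⟶ X ⊗ dual X)
    (hsnake₁ : ∀ X : C,
      (λ_ X).inv ≫ (coev X ▷ X) ≫ (α_ X (dual X) X).hom ≫ (X ◁ ev X) ≫ (ρ_ X).hom
        = 𝟙 X)
    (hsnake₂ : ∀ X : C,
      (ρ_ (dual X)).inv ≫ (dual X ◁ coev X) ≫ (α_ (dual X) X (dual X)).inv ≫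
          (ev X ▷ dual X) ≫ (λ_ (dual X)).hom = 𝟙 (dual X)) :
    -- (F1)
    (∀ A B D E F G H : C,
      (Qphi dual (QQ dual A B D) E F G H).hom ≫ (Qphi dual A B D E (QQ dual F G H)).hom
        = Qmap₁ dual (Qphi dual A B D E F).hom G H ≫
            (Qphi dual A B (QQ dual D E F) G H).hom ≫
            Qmap₃ dual A B (Qphi dual D E F G H).hom) ∧
    -- (F2)
    (∀ A B D : C,
      Qmap₃ dual A B (Qbeta dual coev B D) ≫ (Qphi dual A B B B D).inv ≫
          Qmap₁ dual (Qalpha dual ev A B) B D = 𝟙 (QQ dual A B D)) ∧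
    -- (F3)
    (∀ A : C, Qbeta dual coev A A ≫ Qalpha dual ev A A = 𝟙 A) := by
  refine ⟨?_, ?_, ?_⟩
  · intro A B D E F G H
    simp only [QQ, Qphi, Qmap₁, Qmap₃, Iso.trans_hom, whiskerLeftIso_hom]
    coherence
  · intro A B D
    simp only [QQ, Qphi, Qmap₁, Qmap₃, Qalpha, Qbeta, Iso.trans_inv, whiskerLeftIso_inv,
      MonoidalCategory.whiskerLeft_comp, comp_whiskerRight, assoc]
    have h : dual B ◁ coev B ≫ (α_ (dual B) B (dual B)).inv ≫ ev B ▷ dual B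
        = (ρ_ (dual B)).hom ≫ (λ_ (dual B)).inv := by
      rw [← cancel_epi (ρ_ (dual B)).inv, ← cancel_mono (λ_ (dual B)).hom]
      simpa [assoc] using hsnake₂ B
    calc _ = 𝟙 _ ⊗≫
          A ◁ ((dual B ◁ coev B ≫ (α_ (dual B) B (dual B)).inv ≫ ev B ▷ dual B) ▷ D) ⊗≫
          𝟙 (A ⊗ dual B ⊗ D) := by monoidal
      _ = 𝟙 _ := by rw [h]; monoidal
  · intro A
    simpa [Qbeta, Qalpha, QQ, assoc] using hsnake₁ A
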